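/- Let λ ∈ ℝ with λ ≠ 0 and let C = [[a₁, a₀], [a₀, a₂]] be a symmetric real 2×2 matrix; set β₀ = (a₁+a₂)/4. For ε > 0 let J^ε := ∫₀^∞ exp(-λrA)·C·exp(λrA)·e^{-2εr} dr. Then ε·J^ε converges to β₀·I as ε → 0⁺. -/

import Mathlib

open Matrix

/-- The 2×2 matrix `A = [[0, 1], [-1, 0]]`. -/
noncomputable def matA : Matrix (Fin 2) (Fin 2) ℝ := !![0, 1; -1, 0]

/-- The matrix `J^ε := ∫₀^∞ exp(-λrA)·C·exp(λrA)·e^{-2εr} dr` (entrywise integral). -/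
noncomputable def Jeps (lam : ℝ) (C : Matrix (Fin 2) (Fin 2) ℝ) (ε : ℝ) :
    Matrix (Fin 2) (Fin 2) ℝ :=
  Matrix.of (fun i j =>
    ∫ r in Set.Ioi (0 : ℝ),
      (NormedSpace.exp (-(lam * r) • matA) * C *
        NormedSpace.exp ((lam * r) • matA)) i j * Real.exp (-(2 * ε * r)))

/-!
`exp (t • A)` is the rotation matrix of angle `-t`, so conjugating the symmetric matrix `C` by it
leaves the scalar part `((a₁ + a₂) / 2) • 1` fixed and rotates the trace-free part at angular
frequency `2λ`. The Laplace transform at `2ε` of the constant part is `1 / (2ε)`, while that of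
`cos (2λr)` and `sin (2λr)` stays bounded as `ε → 0` because `λ ≠ 0`. Hence `ε • J^ε` tends to half
the scalar part.
-/

open Real MeasureTheory Set Filter Topology
open Complex (I)
open scoped Complex

lemma integral_cexp_Ioi_eq_div_sq_add_sq {a : ℝ} (ha : 0 < a) (b : ℝ) :
    ∫ r in Ioi (0 : ℝ), cexp ((-a + b * I) * r) = (a + b * I) / ((a ^ 2 + b ^ 2 : ℝ) : ℂ) := by
  have hre : (-a + b * I : ℂ).re < 0 := by simpa using ha
  have hne : ((a ^ 2 + b ^ 2 : ℝ) : ℂ) ≠ 0 := by norm_cast; positivity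
  have hne' : (-a + b * I : ℂ) ≠ 0 := fun h => by simp [h] at hre
  rw [integral_exp_mul_complex_Ioi hre 0, Complex.ofReal_zero, mul_zero, Complex.exp_zero,
    div_eq_div_iff hne' hne]
  push_cast
  linear_combination (-1 : ℂ) * b ^ 2 * Complex.I_sq

lemma integral_trig_mul_exp_neg_Ioi {a : ℝ} (ha : 0 < a) (b m₀ m₁ m₂ : ℝ) :
    ∫ r in Ioi (0 : ℝ), (m₀ + m₁ * cos (b * r) + m₂ * sin (b * r)) * rexp (-(a * r))
      = m₀ / a + (m₁ * a + m₂ * b) / (a ^ 2 + b ^ 2) := by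
  have hre : (-a + b * I : ℂ).re < 0 := by simpa using ha
  have hcexp := (integrableOn_exp_mul_complex_Ioi hre 0).const_mul (m₁ - m₂ * I)
  have hexp : IntegrableOn (fun r : ℝ => rexp (-a * r)) (Ioi 0) :=
    integrableOn_exp_mul_Ioi (neg_neg_of_pos ha) 0
  have hsplit : ∀ r : ℝ, (m₀ + m₁ * cos (b * r) + m₂ * sin (b * r)) * rexp (-(a * r))
      = m₀ * rexp (-a * r) + RCLike.re ((m₁ - m₂ * I) * cexp ((-a + b * I) * r)) := by
    intro r
    simp [Complex.mul_re, Complex.exp_re, Complex.exp_im]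
    ring
  simp_rw [hsplit]
  rw [integral_add (hexp.const_mul m₀) hcexp.re, integral_const_mul, integral_re hcexp,
    integral_const_mul, integral_exp_mul_Ioi (neg_neg_of_pos ha),
    integral_cexp_Ioi_eq_div_sq_add_sq ha, RCLike.re_to_complex, Complex.mul_re,
    Complex.div_ofReal_re, Complex.div_ofReal_im]
  simp
  field_simp

lemma exp_smul_matA (t : ℝ) :
    NormedSpace.exp (t • matA) = !![cos t, sin t; -sin t, cos t] := by
  -- `t • A` is the image of `-t * I` under the regular representation `ℂ →ₐ[ℝ] Matrix`, which
  -- commutes with `exp`; stating this needs some normed algebra structure on matrices.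
  let _ := Matrix.linftyOpNormedRing (n := Fin 2) (α := ℝ)
  let _ := Matrix.linftyOpNormedAlgebra (n := Fin 2) (R := ℝ) (α := ℝ)
  let φ := Algebra.leftMulMatrix Complex.basisOneI
  have hφ : ∀ z : ℂ, φ z = !![z.re, -z.im; z.im, z.re] := Algebra.leftMulMatrix_complex
  have hA : t • matA = φ ((-t : ℝ) * I) := by
    rw [hφ]; ext i j; fin_cases i <;> fin_cases j <;> simp [matA]
  rw [hA]
  refine (NormedSpace.map_exp φ
    (LinearMap.continuous_of_finiteDimensional φ.toLinearMap) _).symm.trans ?_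
  rw [← Complex.exp_eq_exp_ℂ, Complex.exp_mul_I, hφ]
  ext i j; fin_cases i <;> fin_cases j <;> simp [← Complex.ofReal_cos, ← Complex.ofReal_sin]

lemma exp_smul_matA_conj (t a₀ a₁ a₂ : ℝ) :
    NormedSpace.exp (-t • matA) * !![a₁, a₀; a₀, a₂] * NormedSpace.exp (t • matA)
      = ((a₁ + a₂) / 2) • (1 : Matrix (Fin 2) (Fin 2) ℝ)
        + cos (2 * t) • !![(a₁ - a₂) / 2, a₀; a₀, -((a₁ - a₂) / 2)]
        + sin (2 * t) • !![-a₀, (a₁ - a₂) / 2; (a₁ - a₂) / 2, a₀] := by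
  rw [exp_smul_matA, exp_smul_matA, cos_neg, sin_neg, cos_two_mul, sin_two_mul]
  have h := sin_sq_add_cos_sq t
  ext i j
  fin_cases i <;> fin_cases j <;> simp [Matrix.mul_apply, Fin.sum_univ_two, one_apply]
  · linear_combination a₂ * h
  · linear_combination (-a₀) * h
  · linear_combination (-a₀) * h
  · linear_combination a₁ * h

lemma Jeps_eq_of_conj {lam ε : ℝ} (hε : 0 < ε) {C M₀ M₁ M₂ : Matrix (Fin 2) (Fin 2) ℝ}
    (hC : ∀ t : ℝ, NormedSpace.exp (-t • matA) * C * NormedSpace.exp (t • matA)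
      = M₀ + cos (2 * t) • M₁ + sin (2 * t) • M₂) :
    Jeps lam C ε = (1 / (2 * ε)) • M₀ + (2 * ε / ((2 * ε) ^ 2 + (2 * lam) ^ 2)) • M₁
      + (2 * lam / ((2 * ε) ^ 2 + (2 * lam) ^ 2)) • M₂ := by
  ext i j
  calc Jeps lam C ε i j
      = ∫ r in Ioi (0 : ℝ), (M₀ i j + M₁ i j * cos (2 * lam * r) + M₂ i j * sin (2 * lam * r))
          * exp (-(2 * ε * r)) := by
        simp only [Jeps, of_apply, hC, Matrix.add_apply, Matrix.smul_apply, smul_eq_mul,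
          mul_assoc, mul_comm (cos _), mul_comm (sin _)]
    _ = _ := by
        rw [integral_trig_mul_exp_neg_Ioi (by positivity) (2 * lam)]
        simp only [Matrix.add_apply, Matrix.smul_apply, smul_eq_mul]
        ring

lemma tendsto_smul_Jeps_of_conj {lam : ℝ} (hlam : lam ≠ 0)
    {C M₀ M₁ M₂ : Matrix (Fin 2) (Fin 2) ℝ}
    (hC : ∀ t : ℝ, NormedSpace.exp (-t • matA) * C * NormedSpace.exp (t • matA)
      = M₀ + cos (2 * t) • M₁ + sin (2 * t) • M₂) :
    Tendsto (fun ε : ℝ => ε • Jeps lam C ε) (𝓝[>] 0) (𝓝 ((1 / 2 : ℝ) • M₀)) := by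
  have hD : ∀ ε : ℝ, (2 * ε) ^ 2 + (2 * lam) ^ 2 ≠ 0 := fun ε => by positivity
  have h₀ : Tendsto (fun ε : ℝ => ε * (1 / (2 * ε))) (𝓝[>] 0) (𝓝 (1 / 2)) :=
    tendsto_const_nhds.congr' <| eventually_nhdsWithin_of_forall fun ε (hε : 0 < ε) => by
      field_simp
  have hvanish : ∀ g : ℝ → ℝ, Continuous g →
      Tendsto (fun ε : ℝ => ε * (g ε / ((2 * ε) ^ 2 + (2 * lam) ^ 2))) (𝓝[>] 0) (𝓝 0) := by
    intro g hg
    have : Continuous fun ε : ℝ => ε * (g ε / ((2 * ε) ^ 2 + (2 * lam) ^ 2)) := by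
      fun_prop (disch := exact hD _)
    simpa using (this.tendsto 0).mono_left nhdsWithin_le_nhds
  have hlim := ((h₀.smul_const M₀).add
    ((hvanish _ (continuous_const_mul 2)).smul_const M₁)).add
    ((hvanish _ (continuous_const (y := 2 * lam))).smul_const M₂)
  rw [zero_smul, zero_smul, add_zero, add_zero] at hlim
  refine hlim.congr' (eventually_nhdsWithin_of_forall fun ε hε => ?_)
  simp only [Jeps_eq_of_conj hε hC, smul_add, smul_smul]

/-- Let `λ ≠ 0` and `C = [[a₁, a₀], [a₀, a₂]]` symmetric with `β₀ = (a₁+a₂)/4`.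
Then `ε·J^ε → β₀·I` as `ε → 0⁺`. -/
theorem eps_J_eps_tendsto (lam : ℝ) (hlam : lam ≠ 0) (a₀ a₁ a₂ : ℝ)
    (C : Matrix (Fin 2) (Fin 2) ℝ) (hC : C = !![a₁, a₀; a₀, a₂])
    (β₀ : ℝ) (hβ₀ : β₀ = (a₁ + a₂) / 4) :
    Filter.Tendsto (fun ε : ℝ => ε • Jeps lam C ε)
      (nhdsWithin 0 (Set.Ioi 0))
      (nhds (β₀ • (1 : Matrix (Fin 2) (Fin 2) ℝ))) := by
  have h := tendsto_smul_Jeps_of_conj hlam (exp_smul_matA_conj · a₀ a₁ a₂)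
  rwa [smul_smul, show 1 / 2 * ((a₁ + a₂) / 2) = β₀ by rw [hβ₀]; ring, ← hC] at h
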